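/- arXiv:2203.13765 — 4 statements merged into one kernel-verified Lean document; each statement's English description precedes it below -/
import Mathlib

section
/- For every k ≥ 5, the path P_k with k edges has full spectrum: Spec(P_k) = {0, 1, …, k−2} ∪ {k}; that is, for every κ with 0 ≤ κ ≤ k and κ ≠ k−1 there is a proper edge coloring of P_k with exactly κ uniquely colored edges, and no proper edge coloring of P_k has exactly k−1 uniquely colored edges. -/
open SimpleGraph

/-- A proper edge coloring of `G`: edges sharing a vertex receive distinct colors. -/
def IsProperEdgeColoring {V : Type*} (G : SimpleGraph V) (c : Sym2 V → ℕ) : Prop :=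
  ∀ e₁ ∈ G.edgeSet, ∀ e₂ ∈ G.edgeSet,
    e₁ ≠ e₂ → (∃ v, v ∈ e₁ ∧ v ∈ e₂) → c e₁ ≠ c e₂

/-- The set of uniquely colored edges of `F` under the coloring `c`. -/
def uniqueEdges {V : Type*} (F : SimpleGraph V) (c : Sym2 V → ℕ) : Set (Sym2 V) :=
  {e | e ∈ F.edgeSet ∧ ∀ e' ∈ F.edgeSet, c e' = c e → e' = e}

/-- `Spec F` : the set of `k` such that `F` admits a proper edge coloring with
exactly `k` uniquely colored edges. -/
def Spec {V : Type*} (F : SimpleGraph V) : Set ℕ :=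
  {k | ∃ c : Sym2 V → ℕ, IsProperEdgeColoring F c ∧ (uniqueEdges F c).ncard = k}

/-- `f` realizes a copy of `H` inside `G`. -/
def IsCopy {W V : Type*} (H : SimpleGraph W) (G : SimpleGraph V) (f : W → V) : Prop :=
  Function.Injective f ∧ ∀ a b, H.Adj a b → G.Adj (f a) (f b)

/-- Number of uniquely colored edges of the copy of `H` given by `f`. -/
noncomputable def copyUniqueCount {W V : Type*} (H : SimpleGraph W) (c : Sym2 V → ℕ)
    (f : W → V) : ℕ :=
  {e | e ∈ H.edgeSet ∧ ∀ e' ∈ H.edgeSet, c (e'.map f) = c (e.map f) → e' = e}.ncard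

def ContainsKUniqueCopy {W V : Type*} (H : SimpleGraph W) (G : SimpleGraph V)
    (c : Sym2 V → ℕ) (k : ℕ) : Prop :=
  ∃ f : W → V, IsCopy H G f ∧ k ≤ copyUniqueCount H c f

def ContainsExactlyKUniqueCopy {W V : Type*} (H : SimpleGraph W) (G : SimpleGraph V)
    (c : Sym2 V → ℕ) (k : ℕ) : Prop :=
  ∃ f : W → V, IsCopy H G f ∧ copyUniqueCount H c f = k

def ContainsRainbowCopy {W V : Type*} (H : SimpleGraph W) (G : SimpleGraph V)
    (c : Sym2 V → ℕ) : Prop :=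
  ∃ f : W → V, IsCopy H G f ∧
    ∀ e₁ ∈ H.edgeSet, ∀ e₂ ∈ H.edgeSet, e₁ ≠ e₂ → c (e₁.map f) ≠ c (e₂.map f)

/-- The double star `DS_{a,b}`: a dominating edge `y x` with `a` pendant leaves at `y`
and `b` pendant leaves at `x`. -/
def doubleStar (a b : ℕ) : SimpleGraph (Fin 2 ⊕ Fin a ⊕ Fin b) :=
  SimpleGraph.fromEdgeSet
    ({s(Sum.inl 0, Sum.inl 1)} ∪
     {e | ∃ i : Fin a, e = s(Sum.inl 0, Sum.inr (Sum.inl i))} ∪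
     {e | ∃ j : Fin b, e = s(Sum.inl 1, Sum.inr (Sum.inr j))})

/-- The caterpillar `C_{a,b,c}`: a path `x₁x₂x₃` with `a`, `b`, `c` pendant leaves
attached at `x₁`, `x₂`, `x₃` respectively. -/
def caterpillar3 (a b c : ℕ) : SimpleGraph (Fin 3 ⊕ Fin a ⊕ Fin b ⊕ Fin c) :=
  SimpleGraph.fromEdgeSet
    ({s(Sum.inl 0, Sum.inl 1), s(Sum.inl 1, Sum.inl 2)} ∪
     {e | ∃ i : Fin a, e = s(Sum.inl 0, Sum.inr (Sum.inl i))} ∪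
     {e | ∃ i : Fin b, e = s(Sum.inl 1, Sum.inr (Sum.inr (Sum.inl i)))} ∪
     {e | ∃ i : Fin c, e = s(Sum.inl 2, Sum.inr (Sum.inr (Sum.inr i)))})

/-- The rooted tree of depth 2 whose root has `k` children, each with `m` pendant
leaves. -/
def depth2Tree (k m : ℕ) : SimpleGraph (Unit ⊕ Fin k ⊕ Fin k × Fin m) :=
  SimpleGraph.fromEdgeSet
    ({e | ∃ i : Fin k, e = s(Sum.inl (), Sum.inr (Sum.inl i))} ∪
     {e | ∃ (i : Fin k) (j : Fin m),
        e = s(Sum.inr (Sum.inl i), Sum.inr (Sum.inr (i, j)))})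

/-!
In any graph, an edge that is not uniquely colored shares its color with a second edge, which is
then not uniquely colored either; so the number of non-unique edges is never `1`.

Conversely, to make exactly `r ≠ 1` edges of `P_k` non-unique, pick a set `S` of `r` edge indices
in which each parity class is empty or has at least two elements, color edge `n ∈ S` by `n % 2`
and every other edge `n` by the fresh color `n + 2`. Consecutive edges always get different
colors, and the non-unique edges are exactly those indexed by `S`. The set `{0, …, r - 1}` works
for `r = 0` and `r ≥ 4`, while `{0, 2}` and `{0, 2, 4}` handle `r = 2, 3`; the latter needs `k ≥ 5`.
-/

section UniqueEdges

variable {V : Type*} (F : SimpleGraph V) (c : Sym2 V → ℕ)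

lemma uniqueEdges_subset_edgeSet : uniqueEdges F c ⊆ F.edgeSet := fun _ he => he.1

lemma ncard_edgeSet_diff_uniqueEdges_ne_one : (F.edgeSet \ uniqueEdges F c).ncard ≠ 1 := by
  intro h
  obtain ⟨e, he⟩ := Set.ncard_eq_one.mp h
  obtain ⟨heF, heU⟩ : e ∈ F.edgeSet \ uniqueEdges F c := he ▸ rfl
  obtain ⟨e', he'F, hce, hne⟩ : ∃ e' ∈ F.edgeSet, c e' = c e ∧ e' ≠ e := by
    by_contra! hall
    exact heU ⟨heF, hall⟩
  have he'U : e' ∉ uniqueEdges F c := fun h' => hne (h'.2 e heF hce.symm).symm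
  exact hne (he ▸ ⟨he'F, he'U⟩ : e' ∈ ({e} : Set _))

lemma spec_subset {F : SimpleGraph V} (hF : F.edgeSet.Finite) :
    Spec F ⊆ {κ | κ ≤ F.edgeSet.ncard ∧ κ + 1 ≠ F.edgeSet.ncard} := by
  rintro _ ⟨c, -, rfl⟩
  have hsub := uniqueEdges_subset_edgeSet F c
  have hdiff := Set.ncard_sdiff' hsub hF
  have hne := ncard_edgeSet_diff_uniqueEdges_ne_one F c
  have hle := Set.ncard_le_ncard hsub hF
  exact ⟨hle, by omega⟩

lemma uniqueEdges_eq_image {ι : Type*} {edge : ι → Sym2 V} (hedge : Function.Injective edge)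
    (hrange : Set.range edge = F.edgeSet) :
    uniqueEdges F c = edge '' {i | ∀ j, c (edge j) = c (edge i) → j = i} := by
  ext e
  simp only [uniqueEdges, ← hrange, Set.forall_mem_range, Set.mem_ofPred_eq, Set.mem_image]
  constructor
  · rintro ⟨⟨i, rfl⟩, hu⟩
    exact ⟨i, fun j hj => hedge (hu j hj), rfl⟩
  · rintro ⟨i, hu, rfl⟩
    exact ⟨⟨i, rfl⟩, fun j hj => congrArg edge (hu j hj)⟩

end UniqueEdges

namespace SimpleGraph

variable {k : ℕ}

def pathEdge (i : Fin k) : Sym2 (Fin (k + 1)) := s(i.castSucc, i.succ)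

lemma pathEdge_injective : Function.Injective (pathEdge (k := k)) := by
  intro i j h
  rcases Sym2.eq_iff.mp h with ⟨h₁, -⟩ | ⟨h₁, h₂⟩
  · exact Fin.castSucc_injective k h₁
  · have := congrArg Fin.val h₁
    have := congrArg Fin.val h₂
    simp only [Fin.val_castSucc, Fin.val_succ] at *
    omega

lemma range_pathEdge : Set.range (pathEdge (k := k)) = (pathGraph (k + 1)).edgeSet := by
  ext e
  induction e using Sym2.ind with
  | _ a b =>
  rw [mem_edgeSet, pathGraph_adj]
  constructor
  · rintro ⟨i, hi⟩
    rcases Sym2.eq_iff.mp hi with ⟨rfl, rfl⟩ | ⟨rfl, rfl⟩ <;> simp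
  · rintro (h | h)
    · exact ⟨⟨a, by omega⟩, Sym2.eq_iff.mpr (Or.inl ⟨Fin.ext rfl, Fin.ext (by simpa using h)⟩)⟩
    · exact ⟨⟨b, by omega⟩, Sym2.eq_iff.mpr (Or.inr ⟨Fin.ext rfl, Fin.ext (by simpa using h)⟩)⟩

lemma ncard_edgeSet_pathGraph : (pathGraph (k + 1)).edgeSet.ncard = k := by
  rw [← range_pathEdge, ← Set.image_univ, Set.ncard_image_of_injective _ pathEdge_injective,
    Set.ncard_univ, Nat.card_eq_fintype_card, Fintype.card_fin]

/-- The edge coloring of `pathGraph (k + 1)` giving the `n`-th edge `{n, n + 1}` the color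
`g n`. -/
def pathColoring (g : ℕ → ℕ) : Sym2 (Fin (k + 1)) → ℕ :=
  Sym2.lift ⟨fun a b => g (min a b), fun a b => by simp only [min_comm]⟩

@[simp]
lemma pathColoring_pathEdge (g : ℕ → ℕ) (i : Fin k) : pathColoring g (pathEdge i) = g i := by
  simp [pathColoring, pathEdge]

lemma isProperEdgeColoring_pathColoring {g : ℕ → ℕ} (hg : ∀ n, g n ≠ g (n + 1)) :
    IsProperEdgeColoring (pathGraph (k + 1)) (pathColoring g) := by
  simp only [IsProperEdgeColoring, ← range_pathEdge, Set.forall_mem_range]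
  rintro i j hij ⟨v, hvi, hvj⟩
  simp only [pathEdge, Sym2.mem_iff, Fin.ext_iff, Fin.val_castSucc, Fin.val_succ] at hvi hvj
  have hij : (i : ℕ) ≠ j := fun h => hij (congrArg pathEdge (Fin.ext h))
  rw [pathColoring_pathEdge, pathColoring_pathEdge]
  rcases (by omega : (j : ℕ) = i + 1 ∨ (i : ℕ) = j + 1) with h | h
  · rw [h]; exact hg i
  · rw [h]; exact (hg j).symm

end SimpleGraph

section ParityColoring

open Finset

def parityColoring (S : Finset ℕ) (n : ℕ) : ℕ := if n ∈ S then n % 2 else n + 2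

def ParityPaired (S : Finset ℕ) : Prop := ∀ n ∈ S, ∃ m ∈ S, m ≠ n ∧ m % 2 = n % 2

lemma parityColoring_ne_succ (S : Finset ℕ) (n : ℕ) :
    parityColoring S n ≠ parityColoring S (n + 1) := by
  unfold parityColoring
  split_ifs <;> omega

lemma parityColoring_unique_iff {S : Finset ℕ} {k : ℕ} (hS : S ⊆ range k)
    (hpair : ParityPaired S) {n : ℕ} :
    (∀ m < k, parityColoring S m = parityColoring S n → m = n) ↔ n ∉ S := by
  constructor
  · intro hu hn
    obtain ⟨m, hm, hmn, hmod⟩ := hpair n hn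
    exact hmn (hu m (mem_range.mp (hS hm)) (by simp [parityColoring, hm, hn, hmod]))
  · intro hn m _ hm
    unfold parityColoring at hm
    split_ifs at hm <;> omega

theorem sub_card_mem_spec_pathGraph {S : Finset ℕ} {k : ℕ} (hS : S ⊆ range k)
    (hpair : ParityPaired S) :
    k - #S ∈ Spec (pathGraph (k + 1)) := by
  refine ⟨pathColoring (parityColoring S),
    isProperEdgeColoring_pathColoring (parityColoring_ne_succ S), ?_⟩
  rw [uniqueEdges_eq_image _ _ pathEdge_injective range_pathEdge,
    Set.ncard_image_of_injective _ pathEdge_injective]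
  simp only [pathColoring_pathEdge]
  have himage : Fin.val '' {i : Fin k | ∀ j : Fin k,
      parityColoring S j = parityColoring S i → j = i} = ↑(range k \ S) := by
    ext n
    simp only [Set.mem_image, Set.mem_ofPred_eq, coe_sdiff, coe_range, Set.mem_sdiff,
      Set.mem_Iio, mem_coe, ← parityColoring_unique_iff hS hpair, Fin.forall_iff, Fin.ext_iff]
    constructor
    · rintro ⟨i, hi, rfl⟩
      exact ⟨i.2, hi⟩
    · rintro ⟨hn, hu⟩
      exact ⟨⟨n, hn⟩, hu, rfl⟩
  rw [← Set.ncard_image_of_injective _ Fin.val_injective, himage, Set.ncard_coe_finset,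
    card_sdiff_of_subset hS, card_range]

lemma parityPaired_range {r : ℕ} (hr : r = 0 ∨ 4 ≤ r) : ParityPaired (range r) := by
  intro n hn
  rw [mem_range] at hn
  rcases Nat.lt_or_ge n 2 with h | h
  · exact ⟨n + 2, mem_range.mpr (by omega), by omega, by omega⟩
  · exact ⟨n - 2, mem_range.mpr (by omega), by omega, by omega⟩

lemma exists_parityPaired_card_eq {k r : ℕ} (hk : 5 ≤ k) (hr : r ≤ k) (hr₁ : r ≠ 1) :
    ∃ S ⊆ range k, ParityPaired S ∧ #S = r := by
  rcases (by omega : r = 2 ∨ r = 3 ∨ r = 0 ∨ 4 ≤ r) with rfl | rfl | h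
  · refine ⟨{0, 2}, ?_, by unfold ParityPaired; decide, rfl⟩
    intro n; simp only [mem_insert, mem_singleton, mem_range]; omega
  · refine ⟨{0, 2, 4}, ?_, by unfold ParityPaired; decide, rfl⟩
    intro n; simp only [mem_insert, mem_singleton, mem_range]; omega
  · exact ⟨range r, range_subset_range.mpr hr, parityPaired_range h, card_range r⟩

end ParityColoring

/-- For `k ≥ 5` the path `P_k` with `k` edges (i.e. `k+1` vertices) has
full spectrum `{0, 1, …, k−2} ∪ {k}`. -/
theorem path_full_spectrum (k : ℕ) (hk : 5 ≤ k) :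
    Spec (SimpleGraph.pathGraph (k + 1)) = {κ : ℕ | κ ≤ k ∧ κ ≠ k - 1} := by
  ext κ
  constructor
  · intro hκ
    have := spec_subset (Set.toFinite _) hκ
    rw [Set.mem_ofPred_eq, ncard_edgeSet_pathGraph] at this
    exact ⟨this.1, by omega⟩
  · rintro ⟨hle, hne⟩
    obtain ⟨S, hS, hpair, hcard⟩ :=
      exists_parityPaired_card_eq (r := k - κ) hk (Nat.sub_le k κ) (by omega)
    have hκ : κ = k - S.card := by omega
    exact hκ ▸ sub_card_mem_spec_pathGraph hS hpair
end

section
/- Let r ≤ s and 0 ≤ l ≤ r be natural numbers and set j = s − r + 1. If a simple graph G has a proper edge coloring using at most s + l colors, then every copy of the double star DS_{r,s} in G has at most j + 2l − 2 uniquely colored edges; in particular such a coloring contains no (j+2l)-unique copy of DS_{r,s}. -/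
open SimpleGraph

/-!
In a proper edge coloring the `r + 1` edges at `y` get distinct colors, and so do the `s + 1`
edges at `x`. With at most `s + l` colors available, some `I ≥ r + 2 - l` colors occur at both
`y` and `x`. An edge whose color also occurs at the other end is uniquely colored only if it is
the central edge `yx`, so at most `(r + 1 - I) + (s + 1 - I) + 1 ≤ s - r + 2 l - 1` edges of the
copy are uniquely colored.
-/

open Finset

section UniquelyColored

variable {α β : Type*} [DecidableEq β] {g : α → β} {A B : Finset α}

lemma card_filter_notMem_image_add_card_inter (hA : Set.InjOn g A) :
    #(A.filter fun e => g e ∉ B.image g) + #(A.image g ∩ B.image g) = #A := by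
  rw [← card_image_of_injOn hA, ← card_sdiff_add_card_inter (A.image g) (B.image g),
    ← card_image_of_injOn (hA.mono (filter_subset _ A)), sdiff_eq_filter, filter_image]

variable [DecidableEq α]

def uniquelyColored (g : α → β) (E : Finset α) : Finset α :=
  E.filter fun e => ∀ e' ∈ E, g e' = g e → e' = e

lemma uniquelyColored_union_subset :
    uniquelyColored g (A ∪ B) ⊆
      (A.filter fun e => g e ∉ B.image g) ∪ (B.filter fun e => g e ∉ A.image g) ∪ A ∩ B := by
  intro e he
  obtain ⟨heAB, hunique⟩ := mem_filter.1 he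
  by_cases hAB : e ∈ A ∩ B
  · exact mem_union_right _ hAB
  have private_color {X Y : Finset α} (heX : e ∈ X) (hY : ∀ e' ∈ Y, g e' = g e → e' = e)
      (hXY : e ∉ X ∩ Y) : e ∈ X.filter fun e => g e ∉ Y.image g := by
    refine mem_filter.2 ⟨heX, fun hmem => ?_⟩
    obtain ⟨e', he', hg⟩ := mem_image.1 hmem
    obtain rfl := hY e' he' hg
    exact hXY (mem_inter.2 ⟨heX, he'⟩)
  rcases mem_union.1 heAB with heA | heB
  · exact mem_union_left _ (mem_union_left _
      (private_color heA (fun e' he' => hunique e' (mem_union_right _ he')) hAB))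
  · exact mem_union_left _ (mem_union_right _
      (private_color heB (fun e' he' => hunique e' (mem_union_left _ he'))
        (by rwa [inter_comm])))

lemma card_uniquelyColored_union_add_two_mul_card_inter_le
    (hA : Set.InjOn g A) (hB : Set.InjOn g B) :
    #(uniquelyColored g (A ∪ B)) + 2 * #(A.image g ∩ B.image g) ≤ #A + #B + #(A ∩ B) := by
  have hA' := card_filter_notMem_image_add_card_inter (B := B) hA
  have hB' := card_filter_notMem_image_add_card_inter (B := A) hB
  rw [inter_comm] at hB'
  calc #(uniquelyColored g (A ∪ B)) + 2 * #(A.image g ∩ B.image g)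
      ≤ #(A.filter fun e => g e ∉ B.image g) + #(B.filter fun e => g e ∉ A.image g)
          + #(A ∩ B) + 2 * #(A.image g ∩ B.image g) := by
        grw [card_le_card uniquelyColored_union_subset, card_union_le, card_union_le]
    _ = #A + #B + #(A ∩ B) := by omega

lemma card_uniquelyColored_union_add_le (hA : Set.InjOn g A) (hB : Set.InjOn g B) :
    #(uniquelyColored g (A ∪ B)) + #A + #B ≤ 2 * #((A ∪ B).image g) + #(A ∩ B) := by
  have hunion := card_union_add_card_inter (A.image g) (B.image g)
  rw [card_image_of_injOn hA, card_image_of_injOn hB, ← image_union] at hunion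
  have := card_uniquelyColored_union_add_two_mul_card_inter_le hA hB
  omega

end UniquelyColored

section Copy

variable {W V : Type*} {H : SimpleGraph W} {G : SimpleGraph V} {c : Sym2 V → ℕ} {f : W → V}

lemma IsCopy.map_mem_edgeSet (hf : IsCopy H G f) {e : Sym2 W} (he : e ∈ H.edgeSet) :
    e.map f ∈ G.edgeSet :=
  Hom.map_mem_edgeSet ⟨f, hf.2 _ _⟩ he

lemma IsProperEdgeColoring.injOn_incidenceSet (hc : IsProperEdgeColoring G c)
    (hf : IsCopy H G f) (v : W) : Set.InjOn (fun e => c (e.map f)) (H.incidenceSet v) := by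
  intro e₁ ⟨he₁, hv₁⟩ e₂ ⟨he₂, hv₂⟩ hcol
  by_contra hne
  exact hc _ (hf.map_mem_edgeSet he₁) _ (hf.map_mem_edgeSet he₂)
    ((Sym2.map.injective hf.1).ne hne) ⟨f v, Sym2.mem_map.2 ⟨v, hv₁, rfl⟩,
      Sym2.mem_map.2 ⟨v, hv₂, rfl⟩⟩ hcol

lemma copyUniqueCount_eq_card_uniquelyColored [DecidableEq W] {E : Finset (Sym2 W)}
    (hE : H.edgeSet = E) :
    copyUniqueCount H c f = #(uniquelyColored (fun e => c (e.map f)) E) := by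
  rw [copyUniqueCount, hE, ← Set.ncard_coe_finset, uniquelyColored, coe_filter]
  rfl

end Copy

section DoubleStar

variable (r s : ℕ)

def doubleStarEdgesY : Finset (Sym2 (Fin 2 ⊕ Fin r ⊕ Fin s)) :=
  insert s(Sum.inl 0, Sum.inl 1) (univ.image fun i => s(Sum.inl 0, Sum.inr (Sum.inl i)))

def doubleStarEdgesX : Finset (Sym2 (Fin 2 ⊕ Fin r ⊕ Fin s)) :=
  insert s(Sum.inl 0, Sum.inl 1) (univ.image fun j => s(Sum.inl 1, Sum.inr (Sum.inr j)))

lemma card_doubleStarEdgesY : #(doubleStarEdgesY r s) = r + 1 := by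
  rw [doubleStarEdgesY, card_insert_of_notMem (by simp), card_image_of_injective _
    (fun i j h => by simpa using h), card_univ, Fintype.card_fin]

lemma card_doubleStarEdgesX : #(doubleStarEdgesX r s) = s + 1 := by
  rw [doubleStarEdgesX, card_insert_of_notMem (by simp), card_image_of_injective _
    (fun i j h => by simpa using h), card_univ, Fintype.card_fin]

lemma doubleStarEdgesY_inter_doubleStarEdgesX :
    doubleStarEdgesY r s ∩ doubleStarEdgesX r s = {s(Sum.inl 0, Sum.inl 1)} := by
  ext e
  simp only [doubleStarEdgesY, doubleStarEdgesX, mem_inter, mem_insert, mem_image, mem_univ,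
    true_and, mem_singleton]
  aesop

lemma doubleStar_edgeSet :
    (doubleStar r s).edgeSet = ↑(doubleStarEdgesY r s ∪ doubleStarEdgesX r s) := by
  ext e
  simp only [doubleStar, edgeSet_fromEdgeSet, doubleStarEdgesY, doubleStarEdgesX]
  aesop

lemma doubleStarEdgesY_subset_incidenceSet :
    ↑(doubleStarEdgesY r s) ⊆ (doubleStar r s).incidenceSet (Sum.inl 0) := by
  intro e he
  refine ⟨by rw [doubleStar_edgeSet]; exact mem_union_left _ he, ?_⟩
  simp only [doubleStarEdgesY, coe_insert, coe_image] at he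
  aesop

lemma doubleStarEdgesX_subset_incidenceSet :
    ↑(doubleStarEdgesX r s) ⊆ (doubleStar r s).incidenceSet (Sum.inl 1) := by
  intro e he
  refine ⟨by rw [doubleStar_edgeSet]; exact mem_union_right _ he, ?_⟩
  simp only [doubleStarEdgesX, coe_insert, coe_image] at he
  aesop

end DoubleStar

theorem doubleStar_few_colors_not_kUnique_general {V : Type*} (r s l : ℕ)
    (G : SimpleGraph V) (c : Sym2 V → ℕ)
    (hc : IsProperEdgeColoring G c)
    (hcolors : ∃ t : Finset ℕ, t.card ≤ s + l ∧ ∀ e ∈ G.edgeSet, c e ∈ t) :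
    (∀ f : Fin 2 ⊕ Fin r ⊕ Fin s → V, IsCopy (doubleStar r s) G f →
      copyUniqueCount (doubleStar r s) c f + 2 ≤ s - r + 1 + 2 * l) ∧
    ¬ ContainsKUniqueCopy (doubleStar r s) G c (s - r + 1 + 2 * l) := by
  obtain ⟨t, ht, hct⟩ := hcolors
  have hbound (f : Fin 2 ⊕ Fin r ⊕ Fin s → V) (hf : IsCopy (doubleStar r s) G f) :
      copyUniqueCount (doubleStar r s) c f + 2 ≤ s - r + 1 + 2 * l := by
    have hunique := card_uniquelyColored_union_add_le
      ((hc.injOn_incidenceSet hf _).mono (doubleStarEdgesY_subset_incidenceSet r s))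
      ((hc.injOn_incidenceSet hf _).mono (doubleStarEdgesX_subset_incidenceSet r s))
    have hcolorsUsed :
        #((doubleStarEdgesY r s ∪ doubleStarEdgesX r s).image fun e => c (e.map f)) ≤ #t :=
      card_le_card fun _ h => by
        obtain ⟨e, he, rfl⟩ := mem_image.1 h
        exact hct _ (hf.map_mem_edgeSet (by rw [doubleStar_edgeSet]; exact he))
    rw [card_doubleStarEdgesY, card_doubleStarEdgesX, doubleStarEdgesY_inter_doubleStarEdgesX,
      card_singleton] at hunique
    rw [copyUniqueCount_eq_card_uniquelyColored (doubleStar_edgeSet r s)]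
    omega
  exact ⟨hbound, fun ⟨f, hf, hk⟩ => by have := hbound f hf; omega⟩

/-- For `r ≤ s` and `l ≤ r`, if `G` has a proper edge coloring using at
most `s + l` colors, then every copy of `DS_{r,s}` in `G` has at most
`(s − r + 1) + 2l − 2` uniquely colored edges; in particular the coloring contains
no `(j+2l)`-unique copy of `DS_{r,s}`. -/
theorem doubleStar_few_colors_not_kUnique {V : Type*} (r s l : ℕ)
    (hrs : r ≤ s) (hl : l ≤ r) (G : SimpleGraph V) (c : Sym2 V → ℕ)
    (hc : IsProperEdgeColoring G c)
    (hcolors : ∃ t : Finset ℕ, t.card ≤ s + l ∧ ∀ e ∈ G.edgeSet, c e ∈ t) :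
    (∀ f : Fin 2 ⊕ Fin r ⊕ Fin s → V, IsCopy (doubleStar r s) G f →
      copyUniqueCount (doubleStar r s) c f + 2 ≤ s - r + 1 + 2 * l) ∧
    ¬ ContainsKUniqueCopy (doubleStar r s) G c (s - r + 1 + 2 * l) :=
  doubleStar_few_colors_not_kUnique_general r s l G c hc hcolors
end

section
/- Let r ≤ s be natural numbers. For every n ≥ s + r there exists a simple graph G on n vertices with at least ⌊(s+r−1)·n/2⌋ edges together with a proper edge coloring of G containing no rainbow copy of the double star DS_{r,s}. (In other words, ex⋆(n, DS_{r,s}) ≥ (s+r−1)n/2 + o(1).) -/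
/-!
Colour the edge `ab` of `ℤ/n` by `a + b` and keep only the edges whose colour lies in
`{0, …, s + r - 1}`. Two edges at `a` with the same colour `a + b = a + b'` coincide, so the
colouring is proper. Each allowed colour `v ≠ 2a` yields the neighbour `v - a` of `a`, so every
degree is at least `s + r - 1`. Only `s + r` colours occur while `DS_{r,s}` has `s + r + 1` edges,
so no copy of it is rainbow.
-/

open SimpleGraph

open Finset

theorem ContainsRainbowCopy.ncard_edgeSet_le {W V : Type*} {H : SimpleGraph W}
    {G : SimpleGraph V} {c : Sym2 V → ℕ} (h : ContainsRainbowCopy H G c) (T : Finset ℕ)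
    (hc : ∀ e ∈ G.edgeSet, c e ∈ T) : H.edgeSet.ncard ≤ #T := by
  obtain ⟨f, ⟨-, hf⟩, hrainbow⟩ := h
  rw [← Set.ncard_coe_finset]
  refine Set.ncard_le_ncard_of_injOn (fun e => c (e.map f)) (fun e he => ?_)
    (fun e₁ he₁ e₂ he₂ hcol => not_not.1 fun hne => hrainbow e₁ he₁ e₂ he₂ hne hcol)
  induction e using Sym2.ind with
  | _ a b => exact hc _ (hf a b he)

def doubleStarEdge (r s : ℕ) : Unit ⊕ Fin r ⊕ Fin s → Sym2 (Fin 2 ⊕ Fin r ⊕ Fin s)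
  | .inl _ => s(.inl 0, .inl 1)
  | .inr (.inl i) => s(.inl 0, .inr (.inl i))
  | .inr (.inr j) => s(.inl 1, .inr (.inr j))

theorem doubleStarEdge_injective (r s : ℕ) : Function.Injective (doubleStarEdge r s) := by
  rintro (_ | i | j) (_ | i' | j') h <;> simp_all [doubleStarEdge]

theorem edgeSet_doubleStar (r s : ℕ) :
    (doubleStar r s).edgeSet = Set.range (doubleStarEdge r s) := by
  ext e
  simp only [doubleStar, SimpleGraph.edgeSet_fromEdgeSet]
  constructor
  · rintro ⟨(((rfl : e = _) | ⟨i, rfl⟩) | ⟨j, rfl⟩), -⟩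
    exacts [⟨.inl (), rfl⟩, ⟨.inr (.inl i), rfl⟩, ⟨.inr (.inr j), rfl⟩]
  · rintro ⟨_ | i | j, rfl⟩ <;> simp [doubleStarEdge]

theorem ncard_edgeSet_doubleStar (r s : ℕ) : (doubleStar r s).edgeSet.ncard = r + s + 1 := by
  rw [edgeSet_doubleStar, Set.ncard_range_of_injective (doubleStarEdge_injective r s)]
  simp only [Nat.card_eq_fintype_card, Fintype.card_sum, Fintype.card_unit, Fintype.card_fin]
  omega

theorem SimpleGraph.mul_card_le_two_mul_ncard_edgeSet {V : Type*} [Fintype V]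
    (G : SimpleGraph V) [DecidableRel G.Adj] {d : ℕ} (h : ∀ v, d ≤ G.degree v) :
    d * Fintype.card V ≤ 2 * G.edgeSet.ncard := by
  classical
  rw [← G.coe_edgeFinset, Set.ncard_coe_finset, ← G.sum_degrees_eq_twice_card_edges,
    mul_comm, ← smul_eq_mul, ← card_univ, ← sum_const]
  exact sum_le_sum fun v _ => h v

section SumGraph

variable {α : Type*}

def sumGraph [AddCommMagma α] (S : Set α) : SimpleGraph α where
  Adj a b := a ≠ b ∧ a + b ∈ S
  symm := ⟨fun a b h => ⟨h.1.symm, add_comm a b ▸ h.2⟩⟩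
  loopless := ⟨fun _ h => h.1 rfl⟩

@[simp]
theorem sumGraph_adj [AddCommMagma α] {S : Set α} {a b : α} :
    (sumGraph S).Adj a b ↔ a ≠ b ∧ a + b ∈ S := Iff.rfl

def edgeSum [AddCommMagma α] : Sym2 α → α :=
  Sym2.lift ⟨(· + ·), add_comm⟩

theorem edgeSum_mem_of_mem_edgeSet [AddCommMagma α] {S : Set α} {e : Sym2 α}
    (he : e ∈ (sumGraph S).edgeSet) : edgeSum e ∈ S := by
  induction e using Sym2.ind with
  | _ a b => exact he.2

theorem isProperEdgeColoring_comp_edgeSum [AddCommMagma α] [IsLeftCancelAdd α]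
    (G : SimpleGraph α) {σ : α → ℕ} (hσ : Function.Injective σ) :
    IsProperEdgeColoring G (σ ∘ edgeSum) := by
  rintro e₁ - e₂ - hne ⟨v, hv₁, hv₂⟩ hcol
  obtain ⟨a, rfl⟩ := Sym2.mem_iff_exists.1 hv₁
  obtain ⟨b, rfl⟩ := Sym2.mem_iff_exists.1 hv₂
  exact hne (congrArg _ (add_left_cancel (hσ hcol)))

theorem card_sub_one_le_degree_sumGraph [AddCommGroup α] [Fintype α] [DecidableEq α]
    (S : Finset α) [DecidableRel (sumGraph (S : Set α)).Adj] (a : α) :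
    #S - 1 ≤ (sumGraph (S : Set α)).degree a := by
  have hsub : (S.erase (a + a)).image (· - a) ⊆ (sumGraph (S : Set α)).neighborFinset a := by
    simp only [image_subset_iff, mem_erase, SimpleGraph.mem_neighborFinset]
    rintro v ⟨hv, hvS⟩
    exact ⟨fun h => hv (eq_add_of_sub_eq' h.symm), by simpa using hvS⟩
  calc #S - 1 ≤ #(S.erase (a + a)) := pred_card_le_card_erase
    _ = #((S.erase (a + a)).image (· - a)) :=
      (card_image_of_injective _ sub_left_injective).symm
    _ ≤ _ := card_le_card hsub

end SumGraph

theorem doubleStar_rainbow_turan_lower_general (r s : ℕ)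
    (n : ℕ) (hn : s + r ≤ n) :
    ∃ (G : SimpleGraph (Fin n)) (c : Sym2 (Fin n) → ℕ),
      (s + r - 1) * n / 2 ≤ G.edgeSet.ncard ∧ IsProperEdgeColoring G c ∧
      ¬ ContainsRainbowCopy (doubleStar r s) G c := by
  classical
  obtain _ | n := n
  · exact ⟨⊥, 0, by simp, fun e he => by simp at he, fun ⟨f, _⟩ => (f (.inl 0)).elim0⟩
  let S : Finset (Fin (n + 1)) := {v | v < s + r}
  have hS : #S = s + r := by simpa [S, Fin.card_filter_val_lt] using hn
  refine ⟨sumGraph S, Fin.val ∘ edgeSum, ?_,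
    isProperEdgeColoring_comp_edgeSum _ Fin.val_injective, fun h => ?_⟩
  · have hedges := (sumGraph (S : Set (Fin (n + 1)))).mul_card_le_two_mul_ncard_edgeSet
      (card_sub_one_le_degree_sumGraph S)
    rw [hS, Fintype.card_fin] at hedges
    omega
  · have hcolors := h.ncard_edgeSet_le (range (s + r)) fun e he => by
      simpa [S] using edgeSum_mem_of_mem_edgeSet he
    rw [ncard_edgeSet_doubleStar, card_range] at hcolors
    omega

/-- For `r ≤ s` and `n ≥ s + r`, there is an `n`-vertex graph with at
least `⌊(s+r−1)·n/2⌋` edges and a proper edge coloring containing no rainbow copy of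
`DS_{r,s}`; i.e. `ex⋆(n, DS_{r,s}) ≥ (s+r−1)n/2 + o(1)`. -/
theorem doubleStar_rainbow_turan_lower (r s : ℕ) (hrs : r ≤ s)
    (n : ℕ) (hn : s + r ≤ n) :
    ∃ (G : SimpleGraph (Fin n)) (c : Sym2 (Fin n) → ℕ),
      (s + r - 1) * n / 2 ≤ G.edgeSet.ncard ∧ IsProperEdgeColoring G c ∧
      ¬ ContainsRainbowCopy (doubleStar r s) G c :=
  doubleStar_rainbow_turan_lower_general r s n hn
end

section
/- For every n divisible by 6 there exists a simple graph G on n vertices with exactly 5n/2 edges together with a proper edge coloring of G containing no rainbow copy of DS_{2,2}; moreover, for every n, every simple graph on n vertices with more than 3n edges has the property that every proper edge coloring contains a rainbow copy of DS_{2,2}. (In other words, 5n/2 ≤ ex⋆(n, DS_{2,2}) ≤ 6n/2.) -/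
/-
Lower bound: take n/6 disjoint copies of K₆, each coloured by the 1-factorization GK₆. The graph
is 5-regular, and since DS_{2,2} is connected every copy of it lies in a single K₆, where no copy is
rainbow.

Upper bound: if no edge xy has deg x ≥ 7 and deg y ≥ 4, all neighbours of a vertex of degree ≥ 7
have degree ≤ 3, so by double counting the degrees of the high-degree vertices sum to at most those
of the vertices of degree ≤ 3; hence every vertex contributes at most 6 to 2e. Given such an edge
xy, pick two more neighbours y₁, y₂ of y. Among the other neighbours of x, discard y, y₁, y₂ and the
at most two z with c(xz) ∈ {c(yy₁), c(yy₂)} (properness at x); two remain, and they are x₁, x₂.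
-/

open SimpleGraph

open Finset

theorem isProperEdgeColoring_iff {V : Type*} {G : SimpleGraph V} {c : Sym2 V → ℕ} :
    IsProperEdgeColoring G c ↔
      ∀ v a b, G.Adj v a → G.Adj v b → a ≠ b → c s(v, a) ≠ c s(v, b) := by
  constructor
  · intro hc v a b ha hb hab
    exact hc _ ha _ hb (fun h => hab (Sym2.congr_right.mp h))
      ⟨v, Sym2.mem_mk_left _ _, Sym2.mem_mk_left _ _⟩
  · rintro hc e₁ he₁ e₂ he₂ hne ⟨v, hv₁, hv₂⟩
    obtain ⟨a, rfl⟩ := Sym2.mem_iff_exists.mp hv₁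
    obtain ⟨b, rfl⟩ := Sym2.mem_iff_exists.mp hv₂
    exact hc v a b he₁ he₂ fun h => hne (h ▸ rfl)

namespace IsProperEdgeColoring

variable {V : Type*} {G : SimpleGraph V}

theorem apply_ne {c : Sym2 V → ℕ} (hc : IsProperEdgeColoring G c) {v a b : V}
    (ha : G.Adj v a) (hb : G.Adj v b) (hab : a ≠ b) : c s(v, a) ≠ c s(v, b) :=
  isProperEdgeColoring_iff.1 hc v a b ha hb hab

theorem degree_sub_le_card_filter_sdiff [DecidableEq V] [G.LocallyFinite] {c : Sym2 V → ℕ}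
    (hc : IsProperEdgeColoring G c) (v : V) (s : Finset V) (A : Finset ℕ) :
    G.degree v - #s - #A ≤ #{z ∈ G.neighborFinset v \ s | c s(v, z) ∉ A} := by
  have hbad : #{z ∈ G.neighborFinset v \ s | c s(v, z) ∈ A} ≤ #A :=
    card_le_card_of_injOn (fun z => c s(v, z)) (fun _ hz => (mem_filter.1 hz).2)
      fun a ha b hb hab => by
        simp only [coe_filter, mem_sdiff, mem_neighborFinset, Set.mem_ofPred_eq] at ha hb
        by_contra hne
        exact hc.apply_ne ha.1.1 hb.1.1 hne hab
  have hsplit := card_filter_add_card_filter_not (s := G.neighborFinset v \ s)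
    (fun z => c s(v, z) ∈ A)
  have hsdiff := le_card_sdiff s (G.neighborFinset v)
  rw [card_neighborFinset_eq_degree] at hsdiff
  omega

theorem comap {W : Type*} {H : SimpleGraph W} {c : Sym2 W → ℕ} (hc : IsProperEdgeColoring H c)
    (φ : G →g H) (hφ : ∀ u v, G.Reachable u v → φ u = φ v → u = v) :
    IsProperEdgeColoring G (c ∘ Sym2.map φ) := by
  rw [isProperEdgeColoring_iff] at hc ⊢
  intro v a b ha hb hab
  exact hc (φ v) (φ a) (φ b) (φ.map_adj ha) (φ.map_adj hb)
    fun h => hab (hφ a b (ha.symm.reachable.trans hb.reachable) h)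

end IsProperEdgeColoring

section RainbowCopy

variable {U V W : Type*} {F : SimpleGraph U} {G : SimpleGraph V}

theorem containsRainbowCopy_iff_of_edgeSet_eq {c : Sym2 V → ℕ} {L : List (Sym2 U)}
    (hL : F.edgeSet = {e | e ∈ L}) (hnd : L.Nodup) :
    ContainsRainbowCopy F G c ↔ ∃ f : U → V, Function.Injective f ∧
      (∀ e ∈ L, e.map f ∈ G.edgeSet) ∧ (L.map (c ∘ Sym2.map f)).Nodup := by
  have hadj : ∀ f : U → V,
      (∀ a b, F.Adj a b → G.Adj (f a) (f b)) ↔ ∀ e ∈ L, e.map f ∈ G.edgeSet := by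
    intro f
    constructor
    · intro h e he
      induction e using Sym2.ind with
      | h a b => exact h a b (by rw [← mem_edgeSet, hL]; exact he)
    · intro h a b hab
      exact h s(a, b) (by rw [← Set.mem_ofPred_eq (p := (· ∈ L)), ← hL]; exact hab)
  simp only [ContainsRainbowCopy, IsCopy, hadj, List.nodup_map_iff_inj_on hnd, hL,
    Set.mem_ofPred_eq, Function.comp_apply, and_assoc]
  refine exists_congr fun f => and_congr_right fun _ => and_congr_right fun _ => ?_
  exact forall₂_congr fun e₁ _ => forall₂_congr fun e₂ _ => not_imp_not

theorem ContainsRainbowCopy.of_comap {H : SimpleGraph W} {c : Sym2 W → ℕ} (hF : F.Connected)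
    (φ : G →g H) (hφ : ∀ u v, G.Reachable u v → φ u = φ v → u = v)
    (h : ContainsRainbowCopy F G (c ∘ Sym2.map φ)) : ContainsRainbowCopy F H c := by
  obtain ⟨f, ⟨hinj, hadj⟩, hrb⟩ := h
  let f' : F →g G := ⟨f, hadj _ _⟩
  refine ⟨φ ∘ f, ⟨fun a b hab => hinj (hφ _ _ ((hF a b).map f') hab),
    fun a b h => φ.map_adj (hadj a b h)⟩, fun e₁ he₁ e₂ he₂ hne => ?_⟩
  simpa [Sym2.map_map] using hrb e₁ he₁ e₂ he₂ hne

end RainbowCopy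

def doubleStarTwoTwoEdges : List (Sym2 (Fin 2 ⊕ Fin 2 ⊕ Fin 2)) :=
  [s(.inl 0, .inl 1), s(.inl 0, .inr (.inl 0)), s(.inl 0, .inr (.inl 1)),
    s(.inl 1, .inr (.inr 0)), s(.inl 1, .inr (.inr 1))]

theorem doubleStar_two_two_edgeSet :
    (doubleStar 2 2).edgeSet = {e | e ∈ doubleStarTwoTwoEdges} := by
  ext e
  simp only [doubleStar, edgeSet_fromEdgeSet, doubleStarTwoTwoEdges, Fin.exists_fin_two,
    Set.mem_sdiff, Set.mem_union, Set.mem_singleton_iff, Set.mem_ofPred_eq, List.mem_cons,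
    List.not_mem_nil, or_false]
  constructor
  · rintro ⟨h, -⟩
    tauto
  · intro h
    refine ⟨by tauto, ?_⟩
    rcases h with rfl | rfl | rfl | rfl | rfl <;> decide

theorem doubleStar_two_two_connected : (doubleStar 2 2).Connected := by
  have reach : ∀ a b, s(a, b) ∈ doubleStarTwoTwoEdges → (doubleStar 2 2).Reachable a b :=
    fun a b h => Adj.reachable (by rwa [← mem_edgeSet, doubleStar_two_two_edgeSet])
  have reach_x : (doubleStar 2 2).Reachable (.inl 0) (.inl 1) :=
    reach _ _ (by simp [doubleStarTwoTwoEdges])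
  refine (connected_iff_exists_forall_reachable _).2 ⟨.inl 0, ?_⟩
  rintro (a | a | a) <;> fin_cases a
  · rfl
  · exact reach_x
  iterate 2 exact reach _ _ (by simp [doubleStarTwoTwoEdges])
  iterate 2 exact reach_x.trans (reach _ _ (by simp [doubleStarTwoTwoEdges]))

theorem containsRainbowCopy_doubleStar_two_two_iff {V : Type*} {G : SimpleGraph V}
    {c : Sym2 V → ℕ} :
    ContainsRainbowCopy (doubleStar 2 2) G c ↔
      ∃ y x y₁ y₂ x₁ x₂ : V, [y, x, y₁, y₂, x₁, x₂].Nodup ∧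
        G.Adj y x ∧ G.Adj y y₁ ∧ G.Adj y y₂ ∧ G.Adj x x₁ ∧ G.Adj x x₂ ∧
        [c s(y, x), c s(y, y₁), c s(y, y₂), c s(x, x₁), c s(x, x₂)].Nodup := by
  let vertices : List (Fin 2 ⊕ Fin 2 ⊕ Fin 2) :=
    [.inl 0, .inl 1, .inr (.inl 0), .inr (.inl 1), .inr (.inr 0), .inr (.inr 1)]
  have mem_vertices : ∀ a, a ∈ vertices := by
    rintro (a | a | a) <;> fin_cases a <;> simp [vertices]
  rw [containsRainbowCopy_iff_of_edgeSet_eq doubleStar_two_two_edgeSet (by decide)]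
  constructor
  · rintro ⟨f, hf, hE, hC⟩
    refine ⟨f (.inl 0), f (.inl 1), f (.inr (.inl 0)), f (.inr (.inl 1)), f (.inr (.inr 0)),
      f (.inr (.inr 1)), (List.nodup_map_iff hf).2 (show vertices.Nodup by decide), ?_⟩
    simpa [doubleStarTwoTwoEdges, and_assoc] using And.intro hE hC
  · rintro ⟨y, x, y₁, y₂, x₁, x₂, hV, hyx, hyy₁, hyy₂, hxx₁, hxx₂, hC⟩
    let f : Fin 2 ⊕ Fin 2 ⊕ Fin 2 → V := Sum.elim ![y, x] (Sum.elim ![y₁, y₂] ![x₁, x₂])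
    refine ⟨f, fun a b hab => ?_, ?_, ?_⟩
    · exact List.inj_on_of_nodup_map (show (vertices.map f).Nodup from hV)
        (mem_vertices a) (mem_vertices b) hab
    · simp [f, doubleStarTwoTwoEdges, *]
    · simpa [f, doubleStarTwoTwoEdges] using hC

theorem SimpleGraph.card_edgeFinset_le_of_forall_adj {V : Type*} [Fintype V] {G : SimpleGraph V}
    [DecidableRel G.Adj] (d : ℕ) (h : ∀ x y, G.Adj x y → 2 * d < G.degree x → G.degree y ≤ d) :
    #G.edgeFinset ≤ d * Fintype.card V := by
  set L := ({v | 2 * d < G.degree v} : Finset V)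
  set S := ({v | G.degree v ≤ d} : Finset V)
  have hLS : ∑ v ∈ L, G.degree v ≤ ∑ w ∈ S, G.degree w := by
    calc ∑ v ∈ L, G.degree v = ∑ v ∈ L, #(S.bipartiteAbove G.Adj v) := by
          refine sum_congr rfl fun v hv => congrArg card ?_
          ext w
          simp only [mem_neighborFinset, bipartiteAbove, mem_filter, S, mem_univ, true_and]
          exact ⟨fun hw => ⟨h v w hw (mem_filter.1 hv).2, hw⟩, And.right⟩
      _ = ∑ w ∈ S, #(L.bipartiteBelow G.Adj w) :=
          sum_card_bipartiteAbove_eq_sum_card_bipartiteBelow _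
      _ ≤ ∑ w ∈ S, G.degree w := sum_le_sum fun w _ => card_le_card fun v hv => by
          simpa [bipartiteBelow, adj_comm] using (mem_filter.1 hv).2
  have hterm : ∀ v, (if ¬ 2 * d < G.degree v then G.degree v else 0) +
      (if G.degree v ≤ d then G.degree v else 0) ≤ 2 * d := fun v => by split_ifs <;> omega
  have := calc 2 * #G.edgeFinset = ∑ v, G.degree v := (sum_degrees_eq_twice_card_edges G).symm
    _ = ∑ v with ¬ 2 * d < G.degree v, G.degree v + ∑ v ∈ L, G.degree v :=
        (sum_filter_not_add_sum_filter _ _ _).symm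
    _ ≤ ∑ v with ¬ 2 * d < G.degree v, G.degree v + ∑ v ∈ S, G.degree v := by gcongr
    _ = ∑ v, ((if ¬ 2 * d < G.degree v then G.degree v else 0) +
          (if G.degree v ≤ d then G.degree v else 0)) := by
        rw [sum_filter, sum_filter, sum_add_distrib]
    _ ≤ ∑ _v : V, 2 * d := sum_le_sum fun v _ => hterm v
    _ = 2 * (d * Fintype.card V) := by rw [sum_const, card_univ, smul_eq_mul]; ring
  omega

theorem IsProperEdgeColoring.containsRainbowCopy_doubleStar_two_two {V : Type*}
    {G : SimpleGraph V} [G.LocallyFinite] {c : Sym2 V → ℕ} (hc : IsProperEdgeColoring G c)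
    {x y : V} (hxy : G.Adj x y) (hx : 7 ≤ G.degree x) (hy : 4 ≤ G.degree y) :
    ContainsRainbowCopy (doubleStar 2 2) G c := by
  classical
  obtain ⟨y₁, hy₁, y₂, hy₂, hy₁₂⟩ := one_lt_card.1 (show 1 < #((G.neighborFinset y).erase x) by
    rw [card_erase_of_mem ((mem_neighborFinset ..).2 hxy.symm), card_neighborFinset_eq_degree]
    omega)
  have hcard := hc.degree_sub_le_card_filter_sdiff x {y, y₁, y₂} {c s(y, y₁), c s(y, y₂)}
  obtain ⟨x₁, hx₁, x₂, hx₂, hx₁₂⟩ := one_lt_card.1 (lt_of_lt_of_le (by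
    have := card_le_three (a := y) (b := y₁) (c := y₂)
    have := card_le_two (a := c s(y, y₁)) (b := c s(y, y₂))
    omega) hcard)
  simp only [mem_erase, mem_neighborFinset, mem_filter, mem_sdiff, mem_insert,
    mem_singleton, not_or] at hy₁ hy₂ hx₁ hx₂
  obtain ⟨hy₁x, hyy₁⟩ := hy₁
  obtain ⟨hy₂x, hyy₂⟩ := hy₂
  obtain ⟨⟨hxx₁, hx₁y, hx₁y₁, hx₁y₂⟩, hx₁c₁, hx₁c₂⟩ := hx₁
  obtain ⟨⟨hxx₂, hx₂y, hx₂y₁, hx₂y₂⟩, hx₂c₁, hx₂c₂⟩ := hx₂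
  have hyx : c s(y, x) = c s(x, y) := by rw [Sym2.eq_swap]
  rw [containsRainbowCopy_doubleStar_two_two_iff]
  refine ⟨y, x, y₁, y₂, x₁, x₂, ?_, hxy.symm, hyy₁, hyy₂, hxx₁, hxx₂, ?_⟩ <;>
    simp only [List.nodup_cons, List.mem_cons, List.not_mem_nil, or_false, not_or,
      List.nodup_nil, and_true, not_false_eq_true]
  · exact ⟨⟨hxy.ne', hyy₁.ne, hyy₂.ne, Ne.symm hx₁y, Ne.symm hx₂y⟩,
      ⟨Ne.symm hy₁x, Ne.symm hy₂x, hxx₁.ne, hxx₂.ne⟩, ⟨hy₁₂, Ne.symm hx₁y₁, Ne.symm hx₂y₁⟩,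
      ⟨Ne.symm hx₁y₂, Ne.symm hx₂y₂⟩, hx₁₂⟩
  · exact ⟨⟨hc.apply_ne hxy.symm hyy₁ (Ne.symm hy₁x), hc.apply_ne hxy.symm hyy₂ (Ne.symm hy₂x),
      hyx ▸ hc.apply_ne hxy hxx₁ (Ne.symm hx₁y), hyx ▸ hc.apply_ne hxy hxx₂ (Ne.symm hx₂y)⟩,
      ⟨hc.apply_ne hyy₁ hyy₂ hy₁₂, Ne.symm hx₁c₁, Ne.symm hx₂c₁⟩, ⟨Ne.symm hx₁c₂, Ne.symm hx₂c₂⟩,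
      hc.apply_ne hxx₁ hxx₂ hx₁₂⟩

theorem SimpleGraph.IsRegularOfDegree.two_mul_ncard_edgeSet {V : Type*} [Fintype V]
    {G : SimpleGraph V} [DecidableRel G.Adj] {d : ℕ} (h : G.IsRegularOfDegree d) :
    2 * G.edgeSet.ncard = Fintype.card V * d := by
  rw [← coe_edgeFinset, Set.ncard_coe_finset, ← sum_degrees_eq_twice_card_edges]
  simp [h.degree_eq]

def blockGraph (k n : ℕ) : SimpleGraph (Fin n) where
  Adj u v := u ≠ v ∧ u.val / k = v.val / k
  symm := ⟨fun _ _ h => ⟨h.1.symm, h.2.symm⟩⟩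
  loopless := ⟨fun _ h => h.1 rfl⟩

instance (k n : ℕ) : DecidableRel (blockGraph k n).Adj :=
  fun u v => inferInstanceAs (Decidable (u ≠ v ∧ u.val / k = v.val / k))

namespace blockGraph

variable {k n : ℕ}

theorem div_eq_of_reachable {u v : Fin n} (h : (blockGraph k n).Reachable u v) :
    u.val / k = v.val / k := by
  obtain ⟨p⟩ := h
  induction p with
  | nil => rfl
  | cons hadj _ ih => exact hadj.2.trans ih

theorem card_block (hk : k ∣ n) (v : Fin n) :
    #{w : Fin n | w.val / k = v.val / k} = k := by
  obtain ⟨m, rfl⟩ := hk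
  have hk : 0 < k := Nat.pos_of_ne_zero fun h => by subst h; simpa using v.isLt
  let g : Fin k → Fin (k * m) := fun i => ⟨k * (v.val / k) + i, by
    have : v.val / k < m := Nat.div_lt_of_lt_mul v.isLt
    nlinarith [i.isLt]⟩
  have hg : Function.Injective g := fun i j h => Fin.ext (by simpa [g] using congrArg Fin.val h)
  suffices ({w : Fin (k * m) | w.val / k = v.val / k} : Finset _) = univ.image g by
    rw [this, card_image_of_injective _ hg, card_univ, Fintype.card_fin]
  ext w
  simp only [mem_filter, mem_univ, true_and, mem_image]
  constructor
  · intro h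
    exact ⟨⟨w.val % k, Nat.mod_lt _ hk⟩, Fin.ext (by simp [g, ← h, Nat.div_add_mod])⟩
  · rintro ⟨i, rfl⟩
    simp [g, Nat.mul_add_div hk, Nat.div_eq_of_lt i.isLt]

theorem isRegularOfDegree (hk : k ∣ n) : (blockGraph k n).IsRegularOfDegree (k - 1) := by
  intro v
  have : (blockGraph k n).neighborFinset v =
      ({w : Fin n | w.val / k = v.val / k} : Finset _).erase v := by
    ext w
    rw [mem_neighborFinset, mem_erase, mem_filter]
    simp [blockGraph, eq_comm]
  rw [degree, this, card_erase_of_mem (by simp), card_block hk]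

theorem ncard_edgeSet (hk : k ∣ n) : (blockGraph k n).edgeSet.ncard = (k - 1) * n / 2 := by
  have := (isRegularOfDegree hk).two_mul_ncard_edgeSet
  rw [Fintype.card_fin, Nat.mul_comm n] at this
  rw [← this]
  omega

def toComplete (k n : ℕ) [NeZero k] : blockGraph k n →g (⊤ : SimpleGraph (Fin k)) where
  toFun v := Fin.ofNat k v
  map_rel' {u v} h := by
    rw [top_adj, Ne, Fin.ext_iff, Fin.val_ofNat, Fin.val_ofNat]
    exact fun hmod => h.1 (Fin.ext (Nat.ext_div_modEq h.2 hmod))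

theorem toComplete_injective_of_reachable [NeZero k] (u v : Fin n)
    (h : (blockGraph k n).Reachable u v) (huv : toComplete k n u = toComplete k n v) : u = v :=
  Fin.ext (Nat.ext_div_modEq (div_eq_of_reachable h)
    (by simpa [toComplete, Fin.ext_iff, Nat.ModEq] using huv))

end blockGraph

-- GK₆ with 5 playing ∞: colour class j is {a∞ | 2a ≡ j} ∪ {ab | a + b ≡ j} (mod 5).
def k6ColoringFun (a b : Fin 6) : ℕ :=
  if a = 5 then 2 * b.val % 5 else if b = 5 then 2 * a.val % 5 else (a.val + b.val) % 5

def k6Coloring : Sym2 (Fin 6) → ℕ :=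
  Sym2.lift ⟨k6ColoringFun, fun a b => by
    unfold k6ColoringFun; split_ifs <;> simp_all [Nat.add_comm]⟩

theorem isProperEdgeColoring_k6Coloring :
    IsProperEdgeColoring (⊤ : SimpleGraph (Fin 6)) k6Coloring := by
  rw [isProperEdgeColoring_iff]
  decide

theorem not_containsRainbowCopy_k6Coloring :
    ¬ ContainsRainbowCopy (doubleStar 2 2) (⊤ : SimpleGraph (Fin 6)) k6Coloring := by
  -- Every colour class is a perfect matching, so the colours δ, ε of xx₁, xx₂ also occur at y,
  -- necessarily on yx₂ and yx₁; then the δ- and the ε-matching both contain y₁y₂.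
  rw [containsRainbowCopy_doubleStar_two_two_iff]
  decide +kernel

/-- `5n/2 ≤ ex⋆(n, DS_{2,2}) ≤ 6n/2`: for `6 ∣ n` there is an
`n`-vertex graph with exactly `5n/2` edges and a proper edge coloring with no
rainbow `DS_{2,2}`; and every `n`-vertex graph with more than `3n` edges forces a
rainbow `DS_{2,2}` in every proper edge coloring. -/
theorem rainbow_turan_DS22 :
    (∀ n : ℕ, 6 ∣ n → ∃ (G : SimpleGraph (Fin n)) (c : Sym2 (Fin n) → ℕ),
      G.edgeSet.ncard = 5 * n / 2 ∧ IsProperEdgeColoring G c ∧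
      ¬ ContainsRainbowCopy (doubleStar 2 2) G c) ∧
    (∀ (n : ℕ) (G : SimpleGraph (Fin n)), 3 * n < G.edgeSet.ncard →
      ∀ c : Sym2 (Fin n) → ℕ, IsProperEdgeColoring G c →
        ContainsRainbowCopy (doubleStar 2 2) G c) := by
  refine ⟨fun n hn => ⟨blockGraph 6 n, k6Coloring ∘ Sym2.map (blockGraph.toComplete 6 n),
    blockGraph.ncard_edgeSet hn,
    isProperEdgeColoring_k6Coloring.comap _ blockGraph.toComplete_injective_of_reachable,
    fun h => not_containsRainbowCopy_k6Coloring (h.of_comap doubleStar_two_two_connected _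
      blockGraph.toComplete_injective_of_reachable)⟩, fun n G hG c hc => ?_⟩
  classical
  obtain ⟨x, y, hxy, hx, hy⟩ : ∃ x y, G.Adj x y ∧ 7 ≤ G.degree x ∧ 4 ≤ G.degree y := by
    by_contra! h
    have := card_edgeFinset_le_of_forall_adj 3 fun x y hxy hx => by
      have := h x y hxy (by omega)
      omega
    rw [Fintype.card_fin] at this
    rw [← coe_edgeFinset, Set.ncard_coe_finset] at hG
    omega
  exact hc.containsRainbowCopy_doubleStar_two_two hxy hx hy
end
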